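/- arXiv:1707.04907 — 2 statements merged into one kernel-verified Lean document; each statement's English description precedes it below -/
import Mathlib

section
/- (Laplace's method.) Let a < b be reals and f : [a,b] → ℝ be twice continuously differentiable on [a,b]. Suppose x₀ ∈ (a,b) satisfies f(x) < f(x₀) for all x ∈ [a,b] with x ≠ x₀, and f''(x₀) < 0. Then ∫_a^b e^{n·f(x)} dx ∼ e^{n·f(x₀)}·√(2π/(−n·f''(x₀))) as n → ∞, i.e. the ratio of the two sides tends to 1 as the positive integer n tends to infinity. -/
/-!
With `Q = f''(x₀) < 0`, Taylor's theorem gives `f x - f x₀ = Q/2 (x - x₀)² + o((x - x₀)²)` at the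
critical point `x₀`. The substitution `x = x₀ + t/√r` turns `√r ∫ exp(r (f x - f x₀)) dx` into the
integral of `exp(r (f (x₀ + t/√r) - f x₀))`, which tends pointwise to `exp(Q t²/2)`. Near `x₀` the
expansion, and away from `x₀` compactness and the strict maximum, give `f x - f x₀ ≤ -m (x - x₀)²`
on `[a, b]`, so the rescaled integrands are dominated by the Gaussian `exp(-m t²)`. Dominated
convergence and `∫ exp(Q t²/2) dt = √(2π/(-Q))` conclude.
-/

open Real Filter Set MeasureTheory Topology Asymptotics

theorem ContDiffAt.isLittleO_sub_taylor_two {f : ℝ → ℝ} {x₀ : ℝ} (hf : ContDiffAt ℝ 2 f x₀) :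
    (fun x => f x - (f x₀ + deriv f x₀ * (x - x₀) + deriv (deriv f) x₀ / 2 * (x - x₀) ^ 2))
      =o[𝓝 x₀] fun x => (x - x₀) ^ 2 := by
  obtain ⟨u, hu, hfu⟩ := hf.contDiffOn (m := 2) le_rfl (by simp)
  obtain ⟨ε, hε, hball⟩ := Metric.mem_nhds_iff.1 hu
  have hx₀ : x₀ ∈ Metric.ball x₀ ε := Metric.mem_ball_self hε
  have h := taylor_isLittleO (convex_ball x₀ ε) hx₀ (hfu.mono hball)
  rw [Metric.isOpen_ball.nhdsWithin_eq hx₀] at h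
  refine h.congr_left fun x => ?_
  simp only [taylor_within_apply, Finset.sum_range_succ, Finset.sum_range_zero,
    iteratedDerivWithin_of_isOpen Metric.isOpen_ball hx₀, iteratedDeriv_succ, iteratedDeriv_zero,
    smul_eq_mul, Nat.factorial_zero, Nat.factorial_one, Nat.factorial_two, Nat.cast_one,
    Nat.cast_ofNat]
  ring

theorem tendsto_add_div_sqrt_atTop (x₀ t : ℝ) :
    Tendsto (fun r : ℝ => x₀ + t / √r) atTop (𝓝 x₀) := by
  simpa using tendsto_const_nhds.add (tendsto_sqrt_atTop.const_div_atTop t)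

theorem integral_indicator_comp_add_div {a b : ℝ} (hab : a ≤ b) (g : ℝ → ℝ) (x₀ c : ℝ) :
    ∫ t, (Icc a b).indicator g (x₀ + t / c) = |c| * ∫ x in a..b, g x := by
  rw [Measure.integral_comp_div (fun y => (Icc a b).indicator g (x₀ + y)),
    integral_add_left_eq_self, integral_indicator measurableSet_Icc,
    intervalIntegral.integral_of_le hab, integral_Icc_eq_integral_Ioc, smul_eq_mul]

section Laplace

variable {f : ℝ → ℝ} {a b x₀ Q : ℝ}

theorem exists_sub_le_neg_mul_sq_of_isLittleO (hf : ContinuousOn f (Icc a b))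
    (hmax : ∀ x ∈ Icc a b, x ≠ x₀ → f x < f x₀) (hQ : Q < 0)
    (hexp : (fun x => f x - f x₀ - Q / 2 * (x - x₀) ^ 2) =o[𝓝 x₀] fun x => (x - x₀) ^ 2) :
    ∃ m > 0, ∀ x ∈ Icc a b, f x - f x₀ ≤ -m * (x - x₀) ^ 2 := by
  obtain ⟨δ, hδ, hnear⟩ := Metric.eventually_nhds_iff.1 (hexp.bound (c := -Q / 4) (by linarith))
  set K := Icc a b \ Metric.ball x₀ δ
  have hne : ∀ x ∈ K, x ≠ x₀ := fun x hx h => hx.2 (h ▸ Metric.mem_ball_self hδ)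
  have hsq : ∀ x ∈ K, 0 < (x - x₀) ^ 2 := fun x hx => sq_pos_of_ne_zero (sub_ne_zero.2 (hne x hx))
  obtain ⟨m₁, hm₁, hfar⟩ := (isCompact_Icc.diff Metric.isOpen_ball).exists_forall_le'
    (f := fun x => (f x₀ - f x) / (x - x₀) ^ 2)
    ((continuousOn_const.sub (hf.mono sdiff_subset)).div (by fun_prop) fun x hx => (hsq x hx).ne')
    (a := 0) fun x hx => div_pos (sub_pos.2 (hmax x hx.1 (hne x hx))) (hsq x hx)
  refine ⟨min (-Q / 4) m₁, lt_min (by linarith) hm₁, fun x hx => ?_⟩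
  by_cases hxδ : dist x x₀ < δ
  · have h := (abs_le.1 (hnear hxδ)).2
    simp only [norm_pow, Real.norm_eq_abs, sq_abs] at h
    nlinarith [min_le_left (-Q / 4) m₁, sq_nonneg (x - x₀)]
  · have h := hfar x ⟨hx, hxδ⟩
    rw [le_div_iff₀ (hsq x ⟨hx, hxδ⟩)] at h
    nlinarith [min_le_right (-Q / 4) m₁, sq_nonneg (x - x₀)]

theorem tendsto_mul_sub_comp_add_div_sqrt
    (hexp : (fun x => f x - f x₀ - Q / 2 * (x - x₀) ^ 2) =o[𝓝 x₀] fun x => (x - x₀) ^ 2)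
    (t : ℝ) : Tendsto (fun r : ℝ => r * (f (x₀ + t / √r) - f x₀)) atTop (𝓝 (Q / 2 * t ^ 2)) := by
  have hscale : ∀ r : ℝ, 0 < r → r * (t / √r) ^ 2 = t ^ 2 := fun r hr => by
    rw [div_pow, sq_sqrt hr.le]; field_simp
  have h := (isBigO_refl (fun r : ℝ => r) atTop).mul_isLittleO
    (hexp.comp_tendsto (tendsto_add_div_sqrt_atTop x₀ t))
  have hrem : Tendsto (fun r : ℝ => r * (f (x₀ + t / √r) - f x₀) - Q / 2 * t ^ 2) atTop (𝓝 0) := by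
    refine (isLittleO_one_iff ℝ).1 ((h.trans_isBigO ?_).congr' ?_ EventuallyEq.rfl)
    · refine (isBigO_const_const (t ^ 2) one_ne_zero atTop).congr' ?_ EventuallyEq.rfl
      filter_upwards [eventually_gt_atTop 0] with r hr
      simp [hscale r hr]
    · filter_upwards [eventually_gt_atTop 0] with r hr
      simp only [Function.comp_apply, add_sub_cancel_left]
      rw [mul_sub r _ (Q / 2 * _), mul_left_comm, hscale r hr]
  exact tendsto_sub_nhds_zero_iff.1 hrem

theorem tendsto_integral_indicator_exp_rescaled (hf : ContinuousOn f (Icc a b))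
    (hx₀ : x₀ ∈ Ioo a b) (hmax : ∀ x ∈ Icc a b, x ≠ x₀ → f x < f x₀) (hQ : Q < 0)
    (hexp : (fun x => f x - f x₀ - Q / 2 * (x - x₀) ^ 2) =o[𝓝 x₀] fun x => (x - x₀) ^ 2) :
    Tendsto (fun r : ℝ => ∫ t, (Icc a b).indicator (fun x => exp (r * (f x - f x₀))) (x₀ + t / √r))
      atTop (𝓝 √(2 * π / -Q)) := by
  obtain ⟨m, hm, hquad⟩ := exists_sub_le_neg_mul_sq_of_isLittleO hf hmax hQ hexp
  have hgauss : ∫ t, exp (Q / 2 * t ^ 2) = √(2 * π / -Q) := by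
    rw [show Q / 2 = -(-Q / 2) by ring, integral_gaussian]
    congr 1
    field_simp
  rw [← hgauss]
  refine tendsto_integral_filter_of_dominated_convergence (fun t => exp (-m * t ^ 2)) ?_ ?_
    (integrable_exp_neg_mul_sq hm) (ae_of_all _ fun t => ?_)
  · filter_upwards [eventually_gt_atTop 0] with r hr
    have hint : IntegrableOn (fun x => exp (r * (f x - f x₀))) (Icc a b) :=
      (continuous_exp.comp_continuousOn
        (continuousOn_const.mul (hf.sub continuousOn_const))).integrableOn_Icc
    exact (((hint.integrable_indicator measurableSet_Icc).comp_add_left x₀).comp_div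
      (sqrt_pos.2 hr).ne').aestronglyMeasurable
  · filter_upwards [eventually_gt_atTop 0] with r hr
    refine ae_of_all _ fun t => ?_
    by_cases ht : x₀ + t / √r ∈ Icc a b
    · rw [indicator_of_mem ht, norm_of_nonneg (exp_pos _).le, exp_le_exp]
      calc r * (f (x₀ + t / √r) - f x₀) ≤ r * (-m * (x₀ + t / √r - x₀) ^ 2) :=
            mul_le_mul_of_nonneg_left (hquad _ ht) hr.le
        _ = -m * t ^ 2 := by
            rw [add_sub_cancel_left, div_pow, sq_sqrt hr.le]
            field_simp
    · rw [indicator_of_notMem ht, norm_zero]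
      exact (exp_pos _).le
  · have hmem : ∀ᶠ r in atTop, x₀ + t / √r ∈ Icc a b :=
      tendsto_add_div_sqrt_atTop x₀ t (Icc_mem_nhds hx₀.1 hx₀.2)
    refine ((continuous_exp.tendsto _).comp (tendsto_mul_sub_comp_add_div_sqrt hexp t)).congr' ?_
    filter_upwards [hmem] with r hr
    rw [Function.comp_apply, indicator_of_mem hr]

theorem tendsto_sqrt_mul_integral_exp_mul_sub (hf : ContinuousOn f (Icc a b))
    (hx₀ : x₀ ∈ Ioo a b) (hmax : ∀ x ∈ Icc a b, x ≠ x₀ → f x < f x₀) (hQ : Q < 0)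
    (hexp : (fun x => f x - f x₀ - Q / 2 * (x - x₀) ^ 2) =o[𝓝 x₀] fun x => (x - x₀) ^ 2) :
    Tendsto (fun r : ℝ => √r * ∫ x in a..b, exp (r * (f x - f x₀))) atTop
      (𝓝 √(2 * π / -Q)) := by
  refine (tendsto_integral_indicator_exp_rescaled hf hx₀ hmax hQ hexp).congr fun r => ?_
  rw [integral_indicator_comp_add_div (hx₀.1.trans hx₀.2).le, abs_of_nonneg (sqrt_nonneg r)]

theorem tendsto_integral_exp_mul_div_laplace (hf : ContinuousOn f (Icc a b))
    (hx₀ : x₀ ∈ Ioo a b) (hmax : ∀ x ∈ Icc a b, x ≠ x₀ → f x < f x₀) (hQ : Q < 0)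
    (hexp : (fun x => f x - f x₀ - Q / 2 * (x - x₀) ^ 2) =o[𝓝 x₀] fun x => (x - x₀) ^ 2) :
    Tendsto (fun r : ℝ => (∫ x in a..b, exp (r * f x)) / (exp (r * f x₀) * √(2 * π / -(r * Q))))
      atTop (𝓝 1) := by
  have hC : 0 < √(2 * π / -Q) := sqrt_pos.2 (div_pos (by positivity) (neg_pos.2 hQ))
  have h := (tendsto_sqrt_mul_integral_exp_mul_sub hf hx₀ hmax hQ hexp).div_const √(2 * π / -Q)
  rw [div_self hC.ne'] at h
  refine h.congr' ?_
  filter_upwards [eventually_gt_atTop 0] with r hr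
  have hfactor : ∫ x in a..b, exp (r * f x) =
      exp (r * f x₀) * ∫ x in a..b, exp (r * (f x - f x₀)) := by
    rw [← intervalIntegral.integral_const_mul]
    congr 1 with x
    rw [← exp_add]
    ring_nf
  have hsqrt : √(2 * π / -(r * Q)) = √(2 * π / -Q) / √r := by
    rw [← sqrt_div' _ hr.le, div_div, neg_mul_eq_mul_neg, mul_comm r]
  rw [hfactor, hsqrt]
  field_simp

end Laplace

theorem stmt_3_general (a b : ℝ) (f : ℝ → ℝ)
    (hf : ContDiffOn ℝ 2 f (Set.Icc a b))
    (x₀ : ℝ) (hx₀ : x₀ ∈ Set.Ioo a b)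
    (hmax : ∀ x ∈ Set.Icc a b, x ≠ x₀ → f x < f x₀)
    (hf'' : deriv (deriv f) x₀ < 0) :
    Tendsto (fun n : ℕ => (∫ x in a..b, Real.exp (n * f x)) /
      (Real.exp (n * f x₀) * Real.sqrt (2 * π / (-(n * deriv (deriv f) x₀)))))
      atTop (nhds 1) := by
  have hIcc : Icc a b ∈ 𝓝 x₀ := Icc_mem_nhds hx₀.1 hx₀.2
  have hlocal : IsLocalMax f x₀ := Filter.mem_of_superset hIcc fun x hx => by
    show f x ≤ f x₀
    rcases eq_or_ne x x₀ with rfl | hne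
    · exact le_rfl
    · exact (hmax x hx hne).le
  have hexp := (hf.contDiffAt hIcc).isLittleO_sub_taylor_two
  rw [hlocal.deriv_eq_zero] at hexp
  exact (tendsto_integral_exp_mul_div_laplace hf.continuousOn hx₀ hmax hf''
    (hexp.congr_left fun x => by ring)).comp tendsto_natCast_atTop_atTop

theorem stmt_3 (a b : ℝ) (hab : a < b) (f : ℝ → ℝ)
    (hf : ContDiffOn ℝ 2 f (Set.Icc a b))
    (x₀ : ℝ) (hx₀ : x₀ ∈ Set.Ioo a b)
    (hmax : ∀ x ∈ Set.Icc a b, x ≠ x₀ → f x < f x₀)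
    (hf'' : deriv (deriv f) x₀ < 0) :
    Tendsto (fun n : ℕ => (∫ x in a..b, Real.exp (n * f x)) /
      (Real.exp (n * f x₀) * Real.sqrt (2 * π / (-(n * deriv (deriv f) x₀)))))
      atTop (nhds 1) :=
  stmt_3_general a b f hf x₀ hx₀ hmax hf''
end

section
/- Let h be a positive integer and δ = (δ₁,…,δ_h) ∈ {1,−1}^h. Let |δ|₁ and |δ|₋₁ denote the number of entries of δ equal to 1 and to −1 respectively. Then h + ∑_{1≤i<j≤h, δ_i>δ_j} (j−i) + ∑_{1≤i<j≤h, δ_i<δ_j} (h+i−j) = h·(1 + |δ|₁·|δ|₋₁/2). Equivalently, writing W_δ for the multiset consisting of h together with j−i for each pair i<j with δ_i>δ_j and h+i−j for each pair i<j with δ_i<δ_j, one has ∑_{t∈W_δ}(t/(2h) − 1/4) = 1/4, since W_δ has cardinality 1 + |δ|₁·|δ|₋₁. -/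
/-! Each pair `i < j` with `δ i ≠ δ j` contributes the cyclic gap `g p n` from its `+1` position `p`
to its `-1` position `n` on a cycle of length `h`, and `g p n + g n p = h`. Every position `x` has
`∑ y, g x y = ∑ y, g y x = h (h + 1) / 2`, and the gaps inside the `+1` class cancel under swapping,
so the total gap from `+1`s to `-1`s equals the total gap back; each is therefore `h · a₁ a₂ / 2`. -/

open Finset

theorem sum_sum_swap_of_disjoint_union {α β : Type*} [DecidableEq α] [AddCancelCommMonoid β]
    {S P N : Finset α} (hPN : Disjoint P N) (hS : P ∪ N = S) (g : α → α → β)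
    (hg : ∀ x ∈ P, ∑ y ∈ S, g x y = ∑ y ∈ S, g y x) :
    ∑ x ∈ P, ∑ y ∈ N, g x y = ∑ x ∈ P, ∑ y ∈ N, g y x := by
  have hsplit : ∑ x ∈ P, ∑ y ∈ P, g x y + ∑ x ∈ P, ∑ y ∈ N, g x y
      = ∑ x ∈ P, ∑ y ∈ P, g y x + ∑ x ∈ P, ∑ y ∈ N, g y x := by
    simp only [← sum_add_distrib, ← sum_union hPN, hS]
    exact sum_congr rfl hg
  rwa [sum_comm (s := P) (t := P), add_left_cancel_iff] at hsplit

theorem sum_Icc_id_mul_two (h : ℕ) : (∑ y ∈ Icc 1 h, (y : ℝ)) * 2 = h * (h + 1) := by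
  induction h with
  | zero => simp
  | succ n ih => rw [sum_Icc_succ_top (by omega), add_mul, ih]; push_cast; ring

/-- The number of steps from `x` forward to `y` on a cycle of length `h` (equal to `h`, not `0`,
when `x = y`). -/
noncomputable def cyclicGap (h x y : ℕ) : ℝ := if x < y then (y : ℝ) - x else h + y - x

theorem cyclicGap_add_cyclicGap {h x y : ℕ} (hxy : x ≠ y) :
    cyclicGap h x y + cyclicGap h y x = h := by
  unfold cyclicGap
  rcases hxy.lt_or_gt with hlt | hlt
  · rw [if_pos hlt, if_neg hlt.not_gt]; ring
  · rw [if_neg hlt.not_gt, if_pos hlt]; ring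

theorem sum_cyclicGap_comm {h x : ℕ} (hx : x ∈ Icc 1 h) :
    ∑ y ∈ Icc 1 h, cyclicGap h x y = ∑ y ∈ Icc 1 h, cyclicGap h y x := by
  rw [mem_Icc] at hx
  have hle : (Icc 1 h).filter (fun y => ¬ x < y) = Icc 1 x := by
    ext y; simp only [mem_filter, mem_Icc]; omega
  have hge : (Icc 1 h).filter (fun y => ¬ y < x) = Icc x h := by
    ext y; simp only [mem_filter, mem_Icc]; omega
  have hgap : ∀ a b, cyclicGap h a b = (b - a : ℝ) + if a < b then 0 else (h : ℝ) := by
    intro a b; unfold cyclicGap; split_ifs <;> ring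
  simp only [hgap, sum_add_distrib, sum_sub_distrib, sum_ite, sum_const_zero, zero_add,
    sum_const, hle, hge, nsmul_eq_mul, Nat.card_Icc, add_tsub_cancel_right]
  have := sum_Icc_id_mul_two h
  rw [Nat.cast_sub (by omega)]
  push_cast
  linarith

theorem two_mul_sum_cyclicGap {h : ℕ} {P N : Finset ℕ} (hPN : Disjoint P N)
    (hS : P ∪ N = Icc 1 h) :
    2 * ∑ x ∈ P, ∑ y ∈ N, cyclicGap h x y = h * (#P * #N) := by
  have hP : P ⊆ Icc 1 h := hS ▸ subset_union_left
  calc 2 * ∑ x ∈ P, ∑ y ∈ N, cyclicGap h x y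
      = ∑ x ∈ P, ∑ y ∈ N, (cyclicGap h x y + cyclicGap h y x) := by
        rw [two_mul]
        nth_rw 2 [sum_sum_swap_of_disjoint_union hPN hS _ fun x hx => sum_cyclicGap_comm (hP hx)]
        simp only [sum_add_distrib]
    _ = ∑ x ∈ P, ∑ y ∈ N, (h : ℝ) :=
        sum_congr rfl fun x hx => sum_congr rfl fun y hy =>
          cyclicGap_add_cyclicGap (ne_of_mem_of_not_mem hy (disjoint_left.mp hPN hx)).symm
    _ = h * (#P * #N) := by simp only [sum_const, nsmul_eq_mul]; ring

theorem sum_inversions_add_sum_noninversions {α β : Type*} [LinearOrder α] [AddCommMonoid β]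
    {S : Finset α} {δ : α → ℤ} (hδ : ∀ i ∈ S, δ i = 1 ∨ δ i = -1) (f g : α → α → β) :
    ∑ p ∈ (S ×ˢ S).filter (fun p => p.1 < p.2 ∧ δ p.2 < δ p.1), f p.1 p.2 +
      ∑ p ∈ (S ×ˢ S).filter (fun p => p.1 < p.2 ∧ δ p.1 < δ p.2), g p.1 p.2 =
      ∑ x ∈ S.filter (δ · = 1), ∑ y ∈ S.filter (δ · = -1), if x < y then f x y else g y x := by
  set P := S.filter (δ · = 1)
  set N := S.filter (δ · = -1)
  have hA : (S ×ˢ S).filter (fun p => p.1 < p.2 ∧ δ p.2 < δ p.1) =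
      (P ×ˢ N).filter (fun p => p.1 < p.2) := by
    ext ⟨x, y⟩
    have := hδ x
    have := hδ y
    simp only [P, N, mem_filter, mem_product]
    grind
  have hB : (S ×ˢ S).filter (fun p => p.1 < p.2 ∧ δ p.1 < δ p.2) =
      (N ×ˢ P).filter (fun p => p.1 < p.2) := by
    ext ⟨x, y⟩
    have := hδ x
    have := hδ y
    simp only [P, N, mem_filter, mem_product]
    grind
  rw [hA, hB, sum_filter, sum_filter, sum_product, sum_product, sum_comm (s := N),
    ← sum_add_distrib]
  refine sum_congr rfl fun x hx => ?_
  rw [← sum_add_distrib]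
  refine sum_congr rfl fun y hy => ?_
  have hxy : x ≠ y := by
    rintro rfl
    simp only [P, N, mem_filter] at hx hy
    omega
  rcases hxy.lt_or_gt with hlt | hlt <;> simp [hlt, hlt.not_gt]

theorem stmt_11 (h : ℕ) (hh : 0 < h) (δ : ℕ → ℤ)
    (hδ : ∀ i, 1 ≤ i → i ≤ h → δ i = 1 ∨ δ i = -1)
    (a₁ a₂ : ℕ)
    (ha₁ : a₁ = ((Finset.Icc 1 h).filter (fun i => δ i = 1)).card)
    (ha₂ : a₂ = ((Finset.Icc 1 h).filter (fun i => δ i = -1)).card) :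
    ((h : ℝ) +
      (∑ p ∈ ((Finset.Icc 1 h) ×ˢ (Finset.Icc 1 h)).filter
        (fun p => p.1 < p.2 ∧ δ p.2 < δ p.1), ((p.2 : ℝ) - (p.1 : ℝ))) +
      (∑ p ∈ ((Finset.Icc 1 h) ×ˢ (Finset.Icc 1 h)).filter
        (fun p => p.1 < p.2 ∧ δ p.1 < δ p.2), ((h : ℝ) + (p.1 : ℝ) - (p.2 : ℝ))) =
      (h : ℝ) * (1 + (a₁ : ℝ) * (a₂ : ℝ) / 2)) ∧
    (((h : ℝ) / (2 * h) - 1 / 4) +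
      (∑ p ∈ ((Finset.Icc 1 h) ×ˢ (Finset.Icc 1 h)).filter
        (fun p => p.1 < p.2 ∧ δ p.2 < δ p.1), (((p.2 : ℝ) - (p.1 : ℝ)) / (2 * h) - 1 / 4)) +
      (∑ p ∈ ((Finset.Icc 1 h) ×ˢ (Finset.Icc 1 h)).filter
        (fun p => p.1 < p.2 ∧ δ p.1 < δ p.2),
        (((h : ℝ) + (p.1 : ℝ) - (p.2 : ℝ)) / (2 * h) - 1 / 4)) = 1 / 4) ∧
    (1 + (((Finset.Icc 1 h) ×ˢ (Finset.Icc 1 h)).filter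
        (fun p => p.1 < p.2 ∧ δ p.2 < δ p.1)).card +
      (((Finset.Icc 1 h) ×ˢ (Finset.Icc 1 h)).filter
        (fun p => p.1 < p.2 ∧ δ p.1 < δ p.2)).card = 1 + a₁ * a₂) := by
  have hδ' : ∀ i ∈ Icc 1 h, δ i = 1 ∨ δ i = -1 := fun i hi =>
    hδ i (mem_Icc.mp hi).1 (mem_Icc.mp hi).2
  have hPN : Disjoint ((Icc 1 h).filter (δ · = 1)) ((Icc 1 h).filter (δ · = -1)) :=
    disjoint_filter.mpr fun _ _ h1 h2 => by omega
  have hS : (Icc 1 h).filter (δ · = 1) ∪ (Icc 1 h).filter (δ · = -1) = Icc 1 h := by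
    rw [← filter_or, filter_true_of_mem hδ']
  have hsum := sum_inversions_add_sum_noninversions hδ' (fun x y => (y : ℝ) - x)
    (fun x y => (h : ℝ) + x - y)
  have hgap := two_mul_sum_cyclicGap hPN hS
  have hcard := sum_inversions_add_sum_noninversions hδ' (fun _ _ => 1) (fun _ _ => 1)
  simp only [cyclicGap, ← ha₁, ← ha₂] at hgap
  simp only [ite_self, sum_const, smul_eq_mul, mul_one, ← ha₁, ← ha₂] at hcard
  set A := (Icc 1 h ×ˢ Icc 1 h).filter (fun p => p.1 < p.2 ∧ δ p.2 < δ p.1)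
  set B := (Icc 1 h ×ˢ Icc 1 h).filter (fun p => p.1 < p.2 ∧ δ p.1 < δ p.2)
  have hcard' : (#A : ℝ) + #B = a₁ * a₂ := by exact_mod_cast hcard
  refine ⟨by linarith, ?_, by omega⟩
  have hhalf : (h : ℝ) / (2 * h) = 1 / 2 := by field_simp
  have hrest : (∑ p ∈ A, ((p.2 : ℝ) - p.1)) / (2 * h) + (∑ p ∈ B, ((h : ℝ) + p.1 - p.2)) / (2 * h)
      = a₁ * a₂ / 4 := by
    rw [← add_div, hsum]
    field_simp
    linarith
  rw [sum_sub_distrib, sum_sub_distrib]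
  simp only [← sum_div, sum_const, nsmul_eq_mul]
  linarith
end
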